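/- Let n ≥ 1, 1 < p < ∞, and α > 0. Let Q_α¹ denote the operator Q_α in complex dimension 1. Then the operator norm of Q_α on L^p(ℂⁿ, λ) factorizes as ‖Q_α‖_{p→p} = (‖Q_α¹‖_{p→p})ⁿ. -/

import Mathlib

open MeasureTheory Complex ENNReal

/-! Write `Q_α` as the integral operator whose kernel is the product `∏ᵢ q(zᵢ, wᵢ)` of copies
of the kernel `q` of `Q_α¹`. For integral operators `T₁`, `T₂` on `L^p(μ)`, `L^p(ν)`, the operator
with the product kernel on `L^p(μ × ν)` has norm `‖T₁‖ ‖T₂‖`: it factors by Fubini as `T₁` acting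
in the first variable followed by `T₂` acting in the second, and Tonelli on `p`-th powers bounds
each partial application slice by slice (Fubini is legitimate because the kernel sections are in
`L^{p'}`); conversely product test functions `f ⊗ g` realise every product of ratios. Induction
along `ℂⁿ⁺¹ ≅ ℂ × ℂⁿ`, starting from the identity operator on the point `ℂ⁰`, concludes. It needs
`‖Q_α¹‖ ≠ 0`, which holds because the Gaussian `e^{-α|w|²/2}` is a fixed point of `Q_α¹`. -/

/-- The operator `Q_α F(z) = (α/π)ⁿ ∫ e^{−(α/2)(|z|² − 2⟨z,w⟩ + |w|²)} F(w) λ(dw)`,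
where `⟨z,w⟩ = Σᵢ zᵢ conj(wᵢ)`. -/
noncomputable def Qop (n : ℕ) (α : ℝ) (F : (Fin n → ℂ) → ℂ) (z : Fin n → ℂ) : ℂ :=
  ((α / Real.pi) ^ n : ℝ) *
    ∫ w, Complex.exp (-(α / 2 : ℂ) *
        (((∑ i, Complex.normSq (z i) + ∑ i, Complex.normSq (w i) : ℝ) : ℂ) -
          2 * ∑ i, z i * (starRingEnd ℂ) (w i))) * F w ∂volume

/-- The operator norm of `T` on `L^p(μ)`, as the supremum of the ratios
`‖T f‖_p / ‖f‖_p` over nonzero `f ∈ L^p(μ)`. -/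
noncomputable def opNormLp {X : Type*} [MeasurableSpace X] (μ : Measure X)
    (p : ℝ≥0∞) (T : (X → ℂ) → X → ℂ) : ℝ≥0∞ :=
  sSup {r : ℝ≥0∞ | ∃ f : X → ℂ, MemLp f p μ ∧ eLpNorm f p μ ≠ 0 ∧
    r = eLpNorm (T f) p μ / eLpNorm f p μ}

open Function NNReal

noncomputable section

variable {X Y : Type*}

def opOnSnd (T : (Y → ℂ) → Y → ℂ) (F : X × Y → ℂ) (z : X × Y) : ℂ :=
  T (fun y => F (z.1, y)) z.2

def opOnFst (T : (X → ℂ) → X → ℂ) (F : X × Y → ℂ) (z : X × Y) : ℂ :=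
  T (fun x => F (x, z.2)) z.1

lemma opOnFst_eq_opOnSnd_comp_swap (T : (X → ℂ) → X → ℂ) (F : X × Y → ℂ) :
    opOnFst T F = opOnSnd T (F ∘ Prod.swap) ∘ Prod.swap :=
  rfl

variable [MeasurableSpace X] [MeasurableSpace Y]

def kernelOp (μ : Measure X) (k : X → X → ℂ) (f : X → ℂ) (x : X) : ℂ :=
  ∫ y, k x y * f y ∂μ

section KernelOp

variable {μ : Measure X} {k : X → X → ℂ} {f g : X → ℂ}

lemma kernelOp_congr_ae (h : f =ᵐ[μ] g) : kernelOp μ k f = kernelOp μ k g :=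
  funext fun x => integral_congr_ae (h.mono fun y hy => by simp only [hy])

lemma stronglyMeasurable_kernelOp [SFinite μ] (hk : StronglyMeasurable (uncurry k))
    (hf : StronglyMeasurable f) : StronglyMeasurable (kernelOp μ k f) :=
  (hk.mul (hf.comp_measurable measurable_snd)).integral_prod_right'

lemma aestronglyMeasurable_kernelOp [SFinite μ] (hk : StronglyMeasurable (uncurry k))
    (hf : AEStronglyMeasurable f μ) (ξ : Measure X) :
    AEStronglyMeasurable (kernelOp μ k f) ξ := by
  rw [kernelOp_congr_ae hf.ae_eq_mk]
  exact (stronglyMeasurable_kernelOp hk hf.stronglyMeasurable_mk).aestronglyMeasurable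

lemma eLpNorm_kernelOp_le {p : ℝ≥0∞} (hp : p ≠ 0) (hf : MemLp f p μ) :
    eLpNorm (kernelOp μ k f) p μ ≤ opNormLp μ p (kernelOp μ k) * eLpNorm f p μ := by
  by_cases hf0 : eLpNorm f p μ = 0
  · have : kernelOp μ k f = 0 := by
      rw [kernelOp_congr_ae ((eLpNorm_eq_zero_iff hf.1 hp).mp hf0)]
      funext x
      simp [kernelOp]
    simp [this]
  · rw [← ENNReal.div_le_iff hf0 hf.eLpNorm_ne_top]
    exact le_sSup ⟨f, hf, hf0, rfl⟩

end KernelOp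

section Fiberwise

variable {μ : Measure X} {ν : Measure Y} [SFinite ν] {p : ℝ≥0}

lemma MeasureTheory.MemLp.ae_memLp_prodMk_left (hp : p ≠ 0) {F : X × Y → ℂ}
    (hF : MemLp F p (μ.prod ν)) :
    ∀ᵐ x ∂μ, MemLp (fun y => F (x, y)) p ν := by
  have hp' : (0 : ℝ) < p := NNReal.coe_pos.mpr (pos_iff_ne_zero.mpr hp)
  have hfin : ∫⁻ x, ∫⁻ y, ‖F (x, y)‖ₑ ^ (p : ℝ) ∂ν ∂μ ≠ ∞ := by
    rw [← lintegral_prod _ (hF.1.enorm.pow_const _), ← eLpNorm_nnreal_pow_eq_lintegral hp]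
    exact ENNReal.rpow_ne_top_of_nonneg hp'.le hF.eLpNorm_ne_top
  filter_upwards [hF.1.prodMk_left, ae_lt_top' (hF.1.enorm.pow_const _).lintegral_prod_right' hfin]
    with x hmeas hlt
  refine ⟨hmeas, ?_⟩
  rwa [← ENNReal.rpow_lt_top_iff_of_pos hp', eLpNorm_nnreal_pow_eq_lintegral hp]

lemma eLpNorm_opOnSnd_le (hp : p ≠ 0) {T : (Y → ℂ) → Y → ℂ} {N : ℝ≥0∞}
    (hT : ∀ f, MemLp f p ν → eLpNorm (T f) p ν ≤ N * eLpNorm f p ν) {F : X × Y → ℂ}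
    (hF : MemLp F p (μ.prod ν)) (hTF : AEStronglyMeasurable (opOnSnd T F) (μ.prod ν)) :
    eLpNorm (opOnSnd T F) p (μ.prod ν) ≤ N * eLpNorm F p (μ.prod ν) := by
  have hp' : (0 : ℝ) < p := NNReal.coe_pos.mpr (pos_iff_ne_zero.mpr hp)
  rw [← ENNReal.rpow_le_rpow_iff hp', ENNReal.mul_rpow_of_nonneg _ _ hp'.le,
    eLpNorm_nnreal_pow_eq_lintegral hp, eLpNorm_nnreal_pow_eq_lintegral hp,
    lintegral_prod _ (hTF.enorm.pow_const _), lintegral_prod _ (hF.1.enorm.pow_const _),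
    ← lintegral_const_mul'' _ (hF.1.enorm.pow_const _).lintegral_prod_right']
  refine lintegral_mono_ae ((hF.ae_memLp_prodMk_left hp).mono fun x hx => ?_)
  have h := ENNReal.rpow_le_rpow (hT _ hx) hp'.le
  rwa [ENNReal.mul_rpow_of_nonneg _ _ hp'.le, eLpNorm_nnreal_pow_eq_lintegral hp,
    eLpNorm_nnreal_pow_eq_lintegral hp] at h

lemma eLpNorm_opOnFst_le [SFinite μ] (hp : p ≠ 0) {T : (X → ℂ) → X → ℂ} {N : ℝ≥0∞}
    (hT : ∀ f, MemLp f p μ → eLpNorm (T f) p μ ≤ N * eLpNorm f p μ) {F : X × Y → ℂ}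
    (hF : MemLp F p (μ.prod ν)) (hTF : AEStronglyMeasurable (opOnFst T F) (μ.prod ν)) :
    eLpNorm (opOnFst T F) p (μ.prod ν) ≤ N * eLpNorm F p (μ.prod ν) := by
  have hF' : MemLp (F ∘ Prod.swap) p (ν.prod μ) :=
    hF.comp_measurePreserving Measure.measurePreserving_swap
  have hTF' : AEStronglyMeasurable (opOnSnd T (F ∘ Prod.swap)) (ν.prod μ) :=
    hTF.comp_measurePreserving Measure.measurePreserving_swap
  rw [opOnFst_eq_opOnSnd_comp_swap,
    eLpNorm_comp_measurePreserving hTF' Measure.measurePreserving_swap,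
    ← eLpNorm_comp_measurePreserving hF.1 Measure.measurePreserving_swap]
  exact eLpNorm_opOnSnd_le hp hT hF' hTF'

lemma aestronglyMeasurable_opOnSnd_kernelOp {k : Y → Y → ℂ}
    (hk : StronglyMeasurable (uncurry k)) {F : X × Y → ℂ}
    (hF : AEStronglyMeasurable F (μ.prod ν)) :
    AEStronglyMeasurable (opOnSnd (kernelOp ν k) F) (μ.prod ν) := by
  have hmk : StronglyMeasurable (opOnSnd (kernelOp ν k) (hF.mk F)) :=
    ((hk.comp_measurable (measurable_fst.snd.prodMk measurable_snd)).mul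
      (hF.stronglyMeasurable_mk.comp_measurable
        (measurable_fst.fst.prodMk measurable_snd))).integral_prod_right' (ν := ν)
  refine ⟨_, hmk, ?_⟩
  have hslices := Measure.ae_ae_of_ae_prod hF.ae_eq_mk
  filter_upwards [Measure.quasiMeasurePreserving_fst.ae hslices] with z hz
  exact congrFun (kernelOp_congr_ae hz) z.2

lemma aestronglyMeasurable_opOnFst_kernelOp [SFinite μ] {k : X → X → ℂ}
    (hk : StronglyMeasurable (uncurry k)) {F : X × Y → ℂ}
    (hF : AEStronglyMeasurable F (μ.prod ν)) :
    AEStronglyMeasurable (opOnFst (kernelOp μ k) F) (μ.prod ν) :=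
  (aestronglyMeasurable_opOnSnd_kernelOp hk
    (hF.comp_measurePreserving Measure.measurePreserving_swap)).comp_measurePreserving
    Measure.measurePreserving_swap

end Fiberwise


def prodKernel (k₁ : X → X → ℂ) (k₂ : Y → Y → ℂ) (z w : X × Y) : ℂ :=
  k₁ z.1 w.1 * k₂ z.2 w.2

section Tensor

variable {μ : Measure X} {ν : Measure Y} [SFinite ν] {p : ℝ≥0}

lemma eLpNorm_prod_mul (hp : p ≠ 0) {f : X → ℂ} {g : Y → ℂ} (hf : AEStronglyMeasurable f μ)
    (hg : AEStronglyMeasurable g ν) :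
    eLpNorm (fun z : X × Y => f z.1 * g z.2) p (μ.prod ν) = eLpNorm f p μ * eLpNorm g p ν := by
  have hp' : (0 : ℝ) < p := NNReal.coe_pos.mpr (pos_iff_ne_zero.mpr hp)
  apply ENNReal.rpow_left_injective hp'.ne'
  simp only [ENNReal.mul_rpow_of_nonneg _ _ hp'.le, eLpNorm_nnreal_pow_eq_lintegral hp, enorm_mul]
  exact lintegral_prod_mul (hf.enorm.pow_const _) (hg.enorm.pow_const _)

lemma MeasureTheory.MemLp.mul_prod (hp : p ≠ 0) {f : X → ℂ} {g : Y → ℂ} (hf : MemLp f p μ)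
    (hg : MemLp g p ν) : MemLp (fun z : X × Y => f z.1 * g z.2) p (μ.prod ν) :=
  ⟨(hf.1.comp_quasiMeasurePreserving Measure.quasiMeasurePreserving_fst).mul
      (hg.1.comp_quasiMeasurePreserving Measure.quasiMeasurePreserving_snd),
    by rw [eLpNorm_prod_mul hp hf.1 hg.1]; exact ENNReal.mul_lt_top hf.2 hg.2⟩

lemma kernelOp_prodKernel_mul [SFinite μ] (k₁ : X → X → ℂ) (k₂ : Y → Y → ℂ) (f : X → ℂ)
    (g : Y → ℂ) :
    kernelOp (μ.prod ν) (prodKernel k₁ k₂) (fun z => f z.1 * g z.2) =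
      fun z => kernelOp μ k₁ f z.1 * kernelOp ν k₂ g z.2 := by
  funext z
  simp only [kernelOp, prodKernel]
  rw [← integral_prod_mul]
  congr 1
  funext w
  ring

lemma kernelOp_prodKernel [SFinite μ] {k₁ : X → X → ℂ} {k₂ : Y → Y → ℂ} {F : X × Y → ℂ}
    (hint : ∀ z, Integrable (fun w => prodKernel k₁ k₂ z w * F w) (μ.prod ν)) :
    kernelOp (μ.prod ν) (prodKernel k₁ k₂) F =
      opOnSnd (kernelOp ν k₂) (opOnFst (kernelOp μ k₁) F) := by
  funext z
  simp only [kernelOp, opOnSnd, opOnFst, ← integral_const_mul]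
  rw [integral_prod_symm _ (hint z)]
  congr 1
  funext y
  congr 1
  funext x
  simp only [prodKernel]
  ring

end Tensor

section OpNormProd

variable {μ : Measure X} {ν : Measure Y} [SFinite μ] [SFinite ν] {p q : ℝ≥0}
  {k₁ : X → X → ℂ} {k₂ : Y → Y → ℂ}

theorem opNormLp_prodKernel_le [(p : ℝ≥0∞).HolderConjugate q]
    (hk₁ : StronglyMeasurable (uncurry k₁)) (hk₂ : StronglyMeasurable (uncurry k₂))
    (hkq₁ : ∀ x, MemLp (k₁ x) q μ) (hkq₂ : ∀ y, MemLp (k₂ y) q ν)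
    (hN₂ : opNormLp ν p (kernelOp ν k₂) ≠ 0) :
    opNormLp (μ.prod ν) p (kernelOp (μ.prod ν) (prodKernel k₁ k₂)) ≤
      opNormLp μ p (kernelOp μ k₁) * opNormLp ν p (kernelOp ν k₂) := by
  have hp : p ≠ 0 := by exact_mod_cast ENNReal.HolderConjugate.ne_zero (p : ℝ≥0∞) q
  have hq : q ≠ 0 := by exact_mod_cast ENNReal.HolderConjugate.ne_zero (q : ℝ≥0∞) p
  refine sSup_le ?_
  rintro _ ⟨F, hF, hF0, rfl⟩
  rw [ENNReal.div_le_iff hF0 hF.eLpNorm_ne_top]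
  rcases eq_or_ne (opNormLp μ p (kernelOp μ k₁)) ∞ with hN₁ | hN₁
  · simp [hN₁, ENNReal.top_mul hN₂, hF0]
  have hint (z : X × Y) : Integrable (fun w => prodKernel k₁ k₂ z w * F w) (μ.prod ν) :=
    ((hkq₁ z.1).mul_prod hq (hkq₂ z.2)).integrable_mul hF
  have hG := aestronglyMeasurable_opOnFst_kernelOp hk₁ hF.1
  have hGF := eLpNorm_opOnFst_le hp (fun f hf => eLpNorm_kernelOp_le (by exact_mod_cast hp) hf) hF hG
  have hGmem : MemLp (opOnFst (kernelOp μ k₁) F) p (μ.prod ν) :=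
    ⟨hG, hGF.trans_lt (ENNReal.mul_lt_top hN₁.lt_top hF.2)⟩
  rw [kernelOp_prodKernel hint]
  calc _ ≤ opNormLp ν p (kernelOp ν k₂) * eLpNorm (opOnFst (kernelOp μ k₁) F) p (μ.prod ν) :=
        eLpNorm_opOnSnd_le hp (fun f hf => eLpNorm_kernelOp_le (by exact_mod_cast hp) hf) hGmem
          (aestronglyMeasurable_opOnSnd_kernelOp hk₂ hG)
    _ ≤ _ := by grw [hGF]; rw [mul_left_comm, mul_assoc]

theorem le_opNormLp_prodKernel (hp : p ≠ 0)
    (hk₁ : StronglyMeasurable (uncurry k₁)) (hk₂ : StronglyMeasurable (uncurry k₂)) :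
    opNormLp μ p (kernelOp μ k₁) * opNormLp ν p (kernelOp ν k₂) ≤
      opNormLp (μ.prod ν) p (kernelOp (μ.prod ν) (prodKernel k₁ k₂)) := by
  rw [opNormLp, ENNReal.sSup_mul]
  refine iSup₂_le fun _ ⟨f, hf, hf0, hr₁⟩ => ?_
  rw [opNormLp, ENNReal.mul_sSup]
  refine iSup₂_le fun _ ⟨g, hg, hg0, hr₂⟩ => ?_
  refine le_sSup ⟨fun z => f z.1 * g z.2, hf.mul_prod hp hg, ?_, ?_⟩
  · rw [eLpNorm_prod_mul hp hf.1 hg.1]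
    exact mul_ne_zero hf0 hg0
  · rw [hr₁, hr₂, kernelOp_prodKernel_mul,
      eLpNorm_prod_mul hp (aestronglyMeasurable_kernelOp hk₁ hf.1 μ)
        (aestronglyMeasurable_kernelOp hk₂ hg.1 ν), eLpNorm_prod_mul hp hf.1 hg.1,
      ENNReal.mul_div_mul_comm (Or.inl hf0) (Or.inl hf.eLpNorm_ne_top)]

theorem opNormLp_prodKernel [(p : ℝ≥0∞).HolderConjugate q]
    (hk₁ : StronglyMeasurable (uncurry k₁)) (hk₂ : StronglyMeasurable (uncurry k₂))
    (hkq₁ : ∀ x, MemLp (k₁ x) q μ) (hkq₂ : ∀ y, MemLp (k₂ y) q ν)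
    (hN₂ : opNormLp ν p (kernelOp ν k₂) ≠ 0) :
    opNormLp (μ.prod ν) p (kernelOp (μ.prod ν) (prodKernel k₁ k₂)) =
      opNormLp μ p (kernelOp μ k₁) * opNormLp ν p (kernelOp ν k₂) :=
  (opNormLp_prodKernel_le hk₁ hk₂ hkq₁ hkq₂ hN₂).antisymm
    (le_opNormLp_prodKernel (by exact_mod_cast ENNReal.HolderConjugate.ne_zero (p : ℝ≥0∞) q)
      hk₁ hk₂)

end OpNormProd

section Transport

variable {μ : Measure X} {ν : Measure Y} {p : ℝ≥0∞}

lemma kernelOp_comp_measurableEquiv (e : X ≃ᵐ Y) (he : MeasurePreserving e μ ν)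
    {k : X → X → ℂ} {k' : Y → Y → ℂ} (hk : ∀ x w, k' (e x) (e w) = k x w) (g : Y → ℂ) :
    kernelOp ν k' g ∘ e = kernelOp μ k (g ∘ e) := by
  funext x
  simp only [comp_apply, kernelOp, ← he.integral_comp' (fun w => k' (e x) w * g w), hk]

lemma opNormLp_kernelOp_congr (e : X ≃ᵐ Y) (he : MeasurePreserving e μ ν)
    {k : X → X → ℂ} {k' : Y → Y → ℂ} (hk : ∀ x w, k' (e x) (e w) = k x w) :
    opNormLp ν p (kernelOp ν k') = opNormLp μ p (kernelOp μ k) := by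
  have heLp (g : Y → ℂ) : eLpNorm g p ν = eLpNorm (g ∘ e) p μ := by
    rw [← he.map_eq, e.measurableEmbedding.eLpNorm_map_measure]
  have hmem (g : Y → ℂ) : MemLp g p ν ↔ MemLp (g ∘ e) p μ := by
    rw [← he.map_eq, e.measurableEmbedding.memLp_map_measure_iff]
  have hratio (g : Y → ℂ) : eLpNorm (kernelOp ν k' g) p ν / eLpNorm g p ν =
      eLpNorm (kernelOp μ k (g ∘ e)) p μ / eLpNorm (g ∘ e) p μ := by
    rw [heLp, heLp g, kernelOp_comp_measurableEquiv e he hk]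
  unfold opNormLp
  congr 1
  ext r
  constructor
  · rintro ⟨g, hg, hg0, rfl⟩
    exact ⟨g ∘ e, (hmem g).mp hg, heLp g ▸ hg0, hratio g⟩
  · rintro ⟨f, hf, hf0, rfl⟩
    have hf' : (f ∘ e.symm) ∘ e = f := by ext; simp
    refine ⟨f ∘ e.symm, (hmem _).mpr (hf'.symm ▸ hf), ?_, ?_⟩
    · rwa [heLp, hf']
    · rw [hratio, hf']

end Transport

def piKernel {ι : Type*} [Fintype ι] (k : X → X → ℂ) (z w : ι → X) : ℂ :=
  ∏ i, k (z i) (w i)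

section PiKernel

variable {μ : Measure X} {k : X → X → ℂ}

lemma stronglyMeasurable_piKernel {ι : Type*} [Fintype ι] (hk : StronglyMeasurable (uncurry k)) :
    StronglyMeasurable (uncurry (piKernel k : (ι → X) → (ι → X) → ℂ)) :=
  Finset.stronglyMeasurable_fun_prod _ fun i _ =>
    hk.comp_measurable (g := fun a : (ι → X) × (ι → X) => (a.1 i, a.2 i)) (by fun_prop)

lemma memLp_piKernel {ι : Type*} [Fintype ι] [SigmaFinite μ] {q : ℝ≥0} (hq : q ≠ 0)
    (hk : StronglyMeasurable (uncurry k)) (hkq : ∀ x, MemLp (k x) q μ) (z : ι → X) :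
    MemLp (piKernel k z) q (Measure.pi fun _ => μ) := by
  have hq0 : (q : ℝ≥0∞) ≠ 0 := by exact_mod_cast hq
  refine (integrable_norm_rpow_iff ?_ hq0 ENNReal.coe_ne_top).mp ?_
  · exact ((stronglyMeasurable_piKernel hk).comp_measurable
      measurable_prodMk_left).aestronglyMeasurable
  · simp only [piKernel, norm_prod, ← Real.finsetProd_rpow _ _ (fun i _ => norm_nonneg _)]
    exact Integrable.fintype_prod fun i =>
      (integrable_norm_rpow_iff (hkq (z i)).1 hq0 ENNReal.coe_ne_top).mpr (hkq (z i))

lemma piKernel_succ {n : ℕ} (z w : Fin (n + 1) → X) :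
    piKernel k z w = prodKernel k (piKernel k)
      (MeasurableEquiv.piFinSuccAbove (fun _ => X) 0 z)
      (MeasurableEquiv.piFinSuccAbove (fun _ => X) 0 w) := by
  simp [piKernel, prodKernel, Fin.prod_univ_succ, MeasurableEquiv.piFinSuccAbove_apply, Fin.tail]

lemma opNormLp_id [IsFiniteMeasure μ] [NeZero μ] {p : ℝ≥0∞} (hp : p ≠ 0) :
    opNormLp μ p (fun f => f) = 1 := by
  have h1 : eLpNorm (fun _ => (1 : ℂ)) p μ ≠ 0 := by
    simp [eLpNorm_const _ hp (NeZero.ne μ), NeZero.ne μ]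
  refine le_antisymm (sSup_le ?_) (le_sSup ⟨fun _ => 1, memLp_const 1, h1, ?_⟩)
  · rintro _ ⟨f, -, -, rfl⟩
    exact ENNReal.div_self_le_one
  · exact (ENNReal.div_self h1 (memLp_const 1).eLpNorm_ne_top).symm

lemma kernelOp_piKernel_fin_zero :
    kernelOp (Measure.pi fun _ : Fin 0 => μ) (piKernel k) = fun f => f := by
  funext f z
  simp [kernelOp, piKernel, Measure.pi_of_empty _ z, integral_unique, Subsingleton.elim z default]

end PiKernel

theorem opNormLp_kernelOp_piKernel {μ : Measure X} [SigmaFinite μ] {k : X → X → ℂ} {p q : ℝ≥0}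
    [(p : ℝ≥0∞).HolderConjugate q] (hk : StronglyMeasurable (uncurry k))
    (hkq : ∀ x, MemLp (k x) q μ) (hN : opNormLp μ p (kernelOp μ k) ≠ 0) (n : ℕ) :
    opNormLp (Measure.pi fun _ : Fin n => μ) p (kernelOp (Measure.pi fun _ => μ) (piKernel k)) =
      opNormLp μ p (kernelOp μ k) ^ n := by
  induction n with
  | zero =>
    rw [kernelOp_piKernel_fin_zero, Measure.pi_of_empty, pow_zero,
      opNormLp_id (by exact_mod_cast ENNReal.HolderConjugate.ne_zero (p : ℝ≥0∞) q)]
  | succ m ih =>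
    have hq : q ≠ 0 := by exact_mod_cast ENNReal.HolderConjugate.ne_zero (q : ℝ≥0∞) p
    rw [← opNormLp_kernelOp_congr _ (measurePreserving_piFinSuccAbove (fun _ => μ) 0)
        (fun z w => (piKernel_succ z w).symm),
      opNormLp_prodKernel hk (stronglyMeasurable_piKernel hk) hkq (memLp_piKernel hq hk hkq)
        (ih ▸ pow_ne_zero m hN), ih, pow_succ']

def qKernel (α : ℝ) (z w : ℂ) : ℂ :=
  ((α / Real.pi : ℝ) : ℂ) *
    cexp (-(α / 2 : ℂ) * (((normSq z + normSq w : ℝ) : ℂ) - 2 * (z * (starRingEnd ℂ) w)))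

lemma Qop_eq_kernelOp (n : ℕ) (α : ℝ) : Qop n α = kernelOp volume (piKernel (qKernel α)) := by
  funext F z
  simp only [Qop, kernelOp, piKernel, qKernel, ← integral_const_mul]
  congr 1
  funext w
  rw [Finset.prod_mul_distrib, Finset.prod_const, Finset.card_univ, Fintype.card_fin,
    ← Complex.exp_sum, ← Finset.mul_sum, Finset.sum_sub_distrib, ← Finset.mul_sum]
  push_cast
  rw [Finset.sum_add_distrib]
  ring

lemma continuous_qKernel (α : ℝ) : Continuous (uncurry (qKernel α)) := by
  unfold qKernel
  fun_prop

lemma norm_qKernel {α : ℝ} (hα : 0 ≤ α) (z w : ℂ) :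
    ‖qKernel α z w‖ = α / Real.pi * Real.exp (-(α / 2) * ‖w - z‖ ^ 2) := by
  rw [qKernel, norm_mul, Complex.norm_real, Real.norm_of_nonneg (by positivity), Complex.norm_exp]
  congr 2
  rw [← Complex.normSq_eq_norm_sq, Complex.normSq_sub, ← Complex.ofReal_ofNat,
    ← Complex.ofReal_div, ← Complex.ofReal_neg, Complex.re_ofReal_mul]
  congr 1
  simp only [Complex.ofReal_add, Complex.ofReal_ofNat, sub_re, add_re, ofReal_re, mul_re, re_ofNat,
    conj_re, conj_im, mul_neg, sub_neg_eq_add, im_ofNat, mul_im, zero_mul, sub_zero]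
  ring

lemma integrable_exp_neg_mul_norm_sq {b : ℝ} (hb : 0 < b) :
    Integrable (fun w : ℂ => Real.exp (-b * ‖w‖ ^ 2)) := by
  simpa [Complex.norm_exp, ← Complex.ofReal_pow] using
    (GaussianFourier.integrable_cexp_neg_mul_sq_norm_add (V := ℂ) (b := b) (by simpa) 0 0).norm

lemma memLp_exp_neg_mul_norm_sub_sq {b : ℝ} (hb : 0 < b) (z : ℂ) {q : ℝ≥0} (hq : q ≠ 0) :
    MemLp (fun w : ℂ => Real.exp (-b * ‖w - z‖ ^ 2)) q := by
  refine (integrable_norm_rpow_iff (by fun_prop) (by exact_mod_cast hq) ENNReal.coe_ne_top).mp ?_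
  have hq' : (0 : ℝ) < q := NNReal.coe_pos.mpr (pos_iff_ne_zero.mpr hq)
  simp only [Real.norm_eq_abs, Real.abs_exp, ENNReal.coe_toReal, ← Real.exp_mul]
  convert (integrable_exp_neg_mul_norm_sq (mul_pos hb hq')).comp_sub_right z using 2 with w
  ring_nf

lemma memLp_qKernel {α : ℝ} (hα : 0 < α) {q : ℝ≥0} (hq : q ≠ 0) (z : ℂ) :
    MemLp (qKernel α z) q := by
  refine ((memLp_exp_neg_mul_norm_sub_sq (half_pos hα) z hq).const_mul (α / Real.pi)).of_le
    (continuous_qKernel α |>.comp (Continuous.prodMk_right z)).aestronglyMeasurable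
    (Filter.Eventually.of_forall fun w => ?_)
  rw [norm_qKernel hα.le, Real.norm_eq_abs, abs_of_nonneg (by positivity), neg_mul]

def gaussian (α : ℝ) (w : ℂ) : ℂ := cexp (-(α / 2 : ℂ) * normSq w)

lemma memLp_gaussian {α : ℝ} (hα : 0 < α) {q : ℝ≥0} (hq : q ≠ 0) : MemLp (gaussian α) q := by
  refine (memLp_exp_neg_mul_norm_sub_sq (half_pos hα) 0 hq).of_le
    (by unfold gaussian; fun_prop) (Filter.Eventually.of_forall fun w => le_of_eq ?_)
  rw [gaussian, Complex.norm_exp, sub_zero, Real.norm_of_nonneg (Real.exp_nonneg _),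
    ← Complex.normSq_eq_norm_sq, ← Complex.ofReal_ofNat, ← Complex.ofReal_div,
    ← Complex.ofReal_neg, ← Complex.ofReal_mul, Complex.ofReal_re]

lemma integral_cexp_mul_conj_sub_normSq {α : ℝ} (hα : 0 < α) (z : ℂ) :
    ∫ w : ℂ, cexp (α * (z * (starRingEnd ℂ) w) - α * normSq w) = Real.pi / α := by
  rw [← (Complex.volume_preserving_equiv_pi.symm _).integral_comp']
  have key := GaussianFourier.integral_cexp_neg_mul_sum_add (b := α) (by simpa)
    ![α * z, -(Complex.I * α * z)]
  have hc : ∑ i, (![α * z, -(Complex.I * α * z)] : Fin 2 → ℂ) i ^ 2 = 0 := by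
    simp [Fin.sum_univ_two, mul_pow]
  rw [hc, zero_div, Complex.exp_zero, mul_one] at key
  refine (integral_congr_ae (Filter.Eventually.of_forall fun v => ?_)).trans (key.trans ?_)
  · simp only [Fin.sum_univ_two, Matrix.cons_val_zero, Matrix.cons_val_one,
      Complex.measurableEquivPi_symm_apply, Complex.normSq_add_mul_I, map_add, map_mul,
      Complex.conj_ofReal, Complex.conj_I]
    push_cast
    ring_nf
  · simp

lemma kernelOp_qKernel_gaussian {α : ℝ} (hα : 0 < α) :
    kernelOp volume (qKernel α) (gaussian α) = gaussian α := by
  funext z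
  have h (w : ℂ) : qKernel α z w * gaussian α w = ((α / Real.pi : ℝ) : ℂ) * gaussian α z *
      cexp (α * (z * (starRingEnd ℂ) w) - α * normSq w) := by
    rw [qKernel, gaussian, gaussian, mul_assoc, mul_assoc, ← Complex.exp_add, ← Complex.exp_add]
    congr 2
    push_cast
    ring
  simp only [kernelOp, h, integral_const_mul, integral_cexp_mul_conj_sub_normSq hα]
  have : (Real.pi : ℂ) ≠ 0 := Complex.ofReal_ne_zero.mpr Real.pi_ne_zero
  have : (α : ℂ) ≠ 0 := Complex.ofReal_ne_zero.mpr hα.ne'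
  push_cast
  field_simp

lemma one_le_opNormLp_qKernel {α : ℝ} (hα : 0 < α) {p : ℝ≥0} (hp : p ≠ 0) :
    1 ≤ opNormLp volume p (kernelOp volume (qKernel α)) := by
  have hmem := memLp_gaussian hα hp
  have h0 : eLpNorm (gaussian α) p volume ≠ 0 := by
    rw [Ne, eLpNorm_eq_zero_iff hmem.1 (by exact_mod_cast hp)]
    intro h
    obtain ⟨w, hw⟩ := h.exists
    exact Complex.exp_ne_zero _ hw
  refine le_sSup ⟨gaussian α, hmem, h0, ?_⟩
  rw [kernelOp_qKernel_gaussian hα, ENNReal.div_self h0 hmem.eLpNorm_ne_top]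

theorem Qop_opNorm_pow_general (n : ℕ) (p : ℝ) (hp : 1 < p) (α : ℝ)
    (hα : 0 < α) :
    opNormLp (volume : Measure (Fin n → ℂ)) (ENNReal.ofReal p) (Qop n α) =
      opNormLp (volume : Measure (Fin 1 → ℂ)) (ENNReal.ofReal p) (Qop 1 α) ^ n := by
  lift p to ℝ≥0 using by linarith
  have hp' : 1 < p := by exact_mod_cast hp
  have hpq := NNReal.HolderConjugate.conjExponent hp'
  have : (p : ℝ≥0∞).HolderConjugate (p.conjExponent : ℝ≥0∞) :=
    ENNReal.holderConjugate_coe_iff.mpr hpq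
  have hN := (zero_lt_one.trans_le (one_le_opNormLp_qKernel hα (p := p) (by positivity))).ne'
  have h := opNormLp_kernelOp_piKernel (continuous_qKernel α).stronglyMeasurable
    (memLp_qKernel hα hpq.symm.ne_zero) hN
  rw [ENNReal.ofReal_coe_nnreal, Qop_eq_kernelOp, Qop_eq_kernelOp, volume_pi, volume_pi, h, h,
    pow_one]

/-- **Corollary (reduction to one dimension)**: for `1 < p < ∞` and `α > 0`, the
operator norm of `Q_α` on `L^p(ℂⁿ, λ)` is the `n`-th power of the operator norm of the
one-dimensional operator `Q_α¹` on `L^p(ℂ, λ)`. -/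
theorem Qop_opNorm_pow (n : ℕ) (hn : 1 ≤ n) (p : ℝ) (hp : 1 < p) (α : ℝ)
    (hα : 0 < α) :
    opNormLp (volume : Measure (Fin n → ℂ)) (ENNReal.ofReal p) (Qop n α) =
      opNormLp (volume : Measure (Fin 1 → ℂ)) (ENNReal.ofReal p) (Qop 1 α) ^ n :=
  Qop_opNorm_pow_general n p hp α hα
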